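/- Let h : H → K be an isomorphism between subgroups of a group G, F an h-invariant left-invariant lower family of subsets of G, and α an ordinal. If A ⊆ H does not belong to τ^α(F), then for every non-identity z ∈ G the set h(A) ∪ z·h(A) does not belong to τ^{α+1}(F). -/
import Mathlib


open Pointwise

/-- A family of subsets of `G` is left-invariant if it is closed under left translations. -/
def LeftInvariant {G : Type} [Group G] (F : Set (Set G)) : Prop :=
  ∀ A ∈ F, ∀ x : G, x • A ∈ F

/-- A family of subsets is lower if it is closed under taking subsets. -/
def Lower {G : Type} [Group G] (F : Set (Set G)) : Prop :=
  ∀ A B : Set G, A ⊆ B → B ∈ F → A ∈ F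

/-- The transfinite iterates `τ^α(F)`. -/
noncomputable def tauIter {G : Type} [Group G] (F : Set (Set G)) : Ordinal → Set (Set G) :=
  Ordinal.lt_wf.fix fun α ih =>
    if α = 0 then F
    else {A | ∀ x y : G, x ≠ y → ∃ β, ∃ h : β < α, x • A ∩ y • A ∈ ih β h}

/-- The image `h(A) ⊆ G` of a set `A ⊆ H` under an isomorphism `h : H → K`
between subgroups of `G`. -/
def hImg {G : Type} [Group G] {H K : Subgroup G} (e : H ≃* K) (A : Set G) : Set G :=
  Subtype.val '' (⇑e '' (Subtype.val ⁻¹' A))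

/-- `F` is `h`-invariant: for `A ⊆ H`, `A ∈ F` iff `h(A) ∈ F`. -/
def HInv {G : Type} [Group G] {H K : Subgroup G} (e : H ≃* K) (F : Set (Set G)) : Prop :=
  ∀ A : Set G, A ⊆ (H : Set G) → (A ∈ F ↔ hImg e A ∈ F)

section Aux
lemma tauIter_eq {G : Type} [Group G] (F : Set (Set G)) (α : Ordinal) :
    tauIter F α = if α = 0 then F
      else {A | ∀ x y : G, x ≠ y → ∃ β, ∃ _ : β < α, x • A ∩ y • A ∈ tauIter F β} := by
  rw [tauIter, Ordinal.lt_wf.fix_eq]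

lemma tauIter_zero {G : Type} [Group G] (F : Set (Set G)) : tauIter F 0 = F := by
  rw [tauIter_eq]; simp

lemma mem_tauIter_pos {G : Type} [Group G] (F : Set (Set G)) {α : Ordinal} (hα : α ≠ 0)
    (A : Set G) : A ∈ tauIter F α ↔
      ∀ x y : G, x ≠ y → ∃ β, ∃ _ : β < α, x • A ∩ y • A ∈ tauIter F β := by
  conv_lhs => rw [tauIter_eq]
  simp [hα]
variable {G : Type} [Group G] {F : Set (Set G)}

lemma tauIter_lower (hlo : Lower F) : ∀ α, Lower (tauIter F α) := by
  intro α
  induction α using Ordinal.induction with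
  | _ α ih =>
    rcases eq_or_ne α 0 with rfl | hα
    · rwa [tauIter_zero]
    · intro A B hAB hB
      rw [mem_tauIter_pos F hα] at hB ⊢
      intro x y hxy
      obtain ⟨β, hβ, hmem⟩ := hB x y hxy
      exact ⟨β, hβ, ih β hβ _ _ (Set.inter_subset_inter
        (Set.smul_set_mono hAB) (Set.smul_set_mono hAB)) hmem⟩

lemma tauIter_leftInvariant (hli : LeftInvariant F) : ∀ α, LeftInvariant (tauIter F α) := by
  intro α
  rcases eq_or_ne α 0 with rfl | hα
  · rwa [tauIter_zero]
  · intro A hA z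
    rw [mem_tauIter_pos F hα] at hA ⊢
    intro x y hxy
    obtain ⟨β, hβ, hmem⟩ := hA (x * z) (y * z) (by
      intro h; exact hxy (mul_right_cancel h))
    refine ⟨β, hβ, ?_⟩
    have : x • z • A ∩ y • z • A = (x * z) • A ∩ (y * z) • A := by
      simp [smul_smul]
    rwa [this]

lemma tauIter_mono (hli : LeftInvariant F) (hlo : Lower F) {β γ : Ordinal} (h : β ≤ γ) :
    tauIter F β ⊆ tauIter F γ := by
  rcases eq_or_lt_of_le h with rfl | hlt
  · exact subset_rfl
  intro A hA
  have hγ : γ ≠ 0 := fun h0 => by simp [h0] at hlt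
  rw [mem_tauIter_pos F hγ]
  rcases eq_or_ne β 0 with rfl | hβ
  · rw [tauIter_zero] at hA
    intro x y hxy
    refine ⟨0, hlt, ?_⟩
    rw [tauIter_zero]
    exact hlo _ (x • A) Set.inter_subset_left (hli A hA x)
  · rw [mem_tauIter_pos F hβ] at hA
    intro x y hxy
    obtain ⟨δ, hδ, hmem⟩ := hA x y hxy
    exact ⟨δ, hδ.trans hlt, hmem⟩
variable {H K : Subgroup G} (e : H ≃* K)

lemma mem_hImg {A : Set G} {g : G} :
    g ∈ hImg e A ↔ ∃ a : H, (a : G) ∈ A ∧ ((e a : K) : G) = g := by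
  constructor
  · rintro ⟨k, ⟨a, ha, rfl⟩, rfl⟩
    exact ⟨a, ha, rfl⟩
  · rintro ⟨a, ha, rfl⟩
    exact ⟨e a, ⟨a, ha, rfl⟩, rfl⟩

lemma hImg_inter (A B : Set G) : hImg e (A ∩ B) = hImg e A ∩ hImg e B := by
  unfold hImg
  rw [Set.preimage_inter, Set.image_inter e.injective, Set.image_inter Subtype.val_injective]

lemma hImg_smul (a : H) (A : Set G) :
    hImg e ((a : G) • A) = ((e a : K) : G) • hImg e A := by
  ext g
  rw [mem_hImg, Set.mem_smul_set]
  constructor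
  · rintro ⟨b, hb, rfl⟩
    rw [Set.mem_smul_set] at hb
    obtain ⟨c, hc, hac⟩ := hb
    have hcH : c ∈ H := by
      have hmc : c = (a:G)⁻¹ * (b:G) := by rw [← hac, smul_eq_mul]; group
      rw [hmc]; exact mul_mem (inv_mem a.2) b.2
    have hb' : b = a * ⟨c, hcH⟩ := by
      apply Subtype.val_injective
      rw [← hac, smul_eq_mul]; rfl
    refine ⟨((e ⟨c, hcH⟩ : K) : G), (mem_hImg e).2 ⟨⟨c, hcH⟩, hc, rfl⟩, ?_⟩
    rw [hb', map_mul]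
    simp [smul_eq_mul]
  · rintro ⟨g', hg', rfl⟩
    obtain ⟨c, hc, rfl⟩ := (mem_hImg e).1 hg'
    refine ⟨(a * c : H), ?_, by rw [map_mul]; simp [smul_eq_mul]⟩
    rw [Set.mem_smul_set]
    exact ⟨(c:G), hc, rfl⟩
lemma tauIter_hInv (hli : LeftInvariant F) (hlo : Lower F) (hinv : HInv e F)
    {x₀ y₀ : G} (hxy₀ : x₀ ≠ y₀) :
    ∀ α, ∀ A : Set G, A ⊆ (H : Set G) → hImg e A ∈ tauIter F α → A ∈ tauIter F α := by
  intro α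
  induction α using Ordinal.induction with
  | _ α ih =>
    intro A hAH hhA
    rcases eq_or_ne α 0 with rfl | hα
    · rw [tauIter_zero] at hhA ⊢
      exact (hinv A hAH).2 hhA
    rw [mem_tauIter_pos F hα] at hhA ⊢
    intro x y hxy
    rcases Set.eq_empty_or_nonempty (x • A ∩ y • A) with hempty | ⟨g₀, hgx, hgy⟩
    · obtain ⟨β, hβ, hm⟩ := hhA x₀ y₀ hxy₀
      exact ⟨β, hβ, by rw [hempty]; exact tauIter_lower hlo β _ _ (Set.empty_subset _) hm⟩
    · have hxg : x⁻¹ * g₀ ∈ A := by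
        have := Set.mem_smul_set_iff_inv_smul_mem.1 hgx
        simpa [smul_eq_mul] using this
      have hyg : y⁻¹ * g₀ ∈ A := by
        have := Set.mem_smul_set_iff_inv_smul_mem.1 hgy
        simpa [smul_eq_mul] using this
      set x' : G := g₀⁻¹ * x with hx'
      set y' : G := g₀⁻¹ * y with hy'
      have hx'H : x' ∈ H := by
        have hh : x' = (x⁻¹ * g₀)⁻¹ := by rw [hx']; group
        rw [hh]; exact inv_mem (hAH hxg)
      have hy'H : y' ∈ H := by
        have hh : y' = (y⁻¹ * g₀)⁻¹ := by rw [hy']; group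
        rw [hh]; exact inv_mem (hAH hyg)
      have hx'y' : x' ≠ y' := fun h => hxy (mul_left_cancel h)
      set B := x' • A ∩ y' • A with hB
      have hBH : B ⊆ (H : Set G) := by
        intro g hg
        obtain ⟨c, hc, rfl⟩ := Set.mem_smul_set.1 hg.1
        rw [smul_eq_mul]
        exact mul_mem hx'H (hAH hc)
      have hdist : ((e ⟨x', hx'H⟩ : K) : G) ≠ ((e ⟨y', hy'H⟩ : K) : G) := by
        intro h
        exact hx'y' (congrArg Subtype.val (e.injective (Subtype.val_injective h)))
      obtain ⟨β, hβ, hm⟩ := hhA _ _ hdist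
      have hImgB : hImg e B ∈ tauIter F β := by
        have heq : hImg e B =
            ((e ⟨x', hx'H⟩ : K) : G) • hImg e A ∩ ((e ⟨y', hy'H⟩ : K) : G) • hImg e A := by
          rw [hB, hImg_inter, hImg_smul e ⟨x', hx'H⟩, hImg_smul e ⟨y', hy'H⟩]
        rw [heq]; exact hm
      have hBmem : B ∈ tauIter F β := ih β hβ B hBH hImgB
      refine ⟨β, hβ, ?_⟩
      have heq2 : x • A ∩ y • A = g₀ • B := by
        rw [hB, Set.smul_set_inter, smul_smul, smul_smul, hx', hy',
          mul_inv_cancel_left, mul_inv_cancel_left]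
      rw [heq2]
      exact tauIter_leftInvariant hli β B hBmem g₀
end Aux

theorem stmt_11 {G : Type} [Group G] {H K : Subgroup G} (e : H ≃* K)
    (F : Set (Set G)) (hli : LeftInvariant F) (hlo : Lower F) (hinv : HInv e F)
    (α : Ordinal) (A : Set G) (hA : A ⊆ (H : Set G)) (hAα : A ∉ tauIter F α)
    (z : G) (hz : z ≠ 1) :
    hImg e A ∪ z • hImg e A ∉ tauIter F (α + 1) := by
  intro hmem
  have hsucc : (α + 1 : Ordinal) ≠ 0 := by
    rw [Ordinal.add_one_eq_succ]
    exact (Order.succ_ne_bot α)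
  rw [mem_tauIter_pos F hsucc] at hmem
  obtain ⟨β, hβ, hm⟩ := hmem 1 z (Ne.symm hz)
  have hβα : β ≤ α := by
    rwa [Ordinal.add_one_eq_succ, Order.lt_succ_iff] at hβ
  rw [one_smul] at hm
  have h1 : z • hImg e A ∈ tauIter F β :=
    tauIter_lower hlo β _ _
      (Set.subset_inter Set.subset_union_right
        (Set.smul_set_mono Set.subset_union_left)) hm
  have h2 : hImg e A ∈ tauIter F β := by
    have := tauIter_leftInvariant hli β _ h1 z⁻¹
    rwa [inv_smul_smul] at this
  have h3 : hImg e A ∈ tauIter F α := tauIter_mono hli hlo hβα h2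
  exact hAα (tauIter_hInv e hli hlo hinv hz α A hA h3)
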